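/- arXiv:2311.14651 — 2 statements merged into one kernel-verified Lean document; each statement's English description precedes it below -/
import Mathlib

section
/- Let A and B be n×m matrices with natural number entries (functions Fin n → Fin m → ℕ) such that for every row i, Σ_j A(i,j) = Σ_j B(i,j). Let L = Σ_{i,j} |B(i,j) − A(i,j)|. Then there exists a sequence of matrices A = A_0, A_1, …, A_{L/2} = B with natural number entries, such that for each t, A_{t+1} is obtained from A_t by a single swap (i; j, k) with j ≠ k — adding 1 to entry (i,j) and subtracting 1 from entry (i,k) — performed at a position where A_t(i,j) < B(i,j) and A_t(i,k) > B(i,k); consequently ‖B − A_t‖₁ = L − 2t for every t. -/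
private lemma even_dist {m : ℕ} (a b : Fin m → ℕ) (h : ∑ j, a j = ∑ j, b j) :
    Even (∑ j, ((b j : ℤ) - (a j : ℤ)).natAbs) := by
  have hz : ∑ j, ((b j : ℤ) - (a j : ℤ)) = 0 := by
    rw [Finset.sum_sub_distrib, ← Nat.cast_sum, ← Nat.cast_sum, h]; ring
  have h1 : Even (∑ j, ((((b j : ℤ) - a j).natAbs : ℤ))) := by
    have e : ∑ j, ((((b j : ℤ) - a j).natAbs : ℤ))
        = ∑ j, (|((b j : ℤ) - a j)| - ((b j : ℤ) - a j)) + ∑ j, ((b j : ℤ) - a j) := by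
      rw [← Finset.sum_add_distrib]
      refine Finset.sum_congr rfl fun i _ => ?_
      rw [Int.abs_eq_natAbs]; ring
    rw [e, hz, add_zero]
    apply Finset.even_sum
    intro i _
    rcases abs_choice ((b i : ℤ) - a i) with hc | hc <;> rw [hc]
    · simp
    · exact ⟨-((b i : ℤ) - a i), by ring⟩
  rw [← Nat.cast_sum] at h1
  exact_mod_cast h1

private lemma swapExistsAux {n m : ℕ} (A B : Fin n → Fin m → ℕ)
    (hrow : ∀ i, ∑ j, A i j = ∑ j, B i j) (hne : A ≠ B) :
    ∃ (i : Fin n) (j k : Fin m), j ≠ k ∧ A i j < B i j ∧ B i k < A i k := by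
  have : ∃ i j0, A i j0 ≠ B i j0 := by
    by_contra hc
    push_neg at hc
    exact hne (funext fun i => funext fun j => hc i j)
  obtain ⟨i, j0, hj0⟩ := this
  have hj : ∃ j, A i j < B i j := by
    by_contra hc
    push_neg at hc
    rcases lt_or_eq_of_le (hc j0) with h0 | h0
    · have := Finset.sum_lt_sum (f := B i) (g := A i)
        (fun j _ => hc j) ⟨j0, Finset.mem_univ _, h0⟩
      have h2 := hrow i
      omega
    · exact hj0 h0.symm
  have hk : ∃ k, B i k < A i k := by
    by_contra hc
    push_neg at hc
    obtain ⟨j, hjlt⟩ := hj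
    have := Finset.sum_lt_sum (f := A i) (g := B i)
      (fun j _ => hc j) ⟨j, Finset.mem_univ _, hjlt⟩
    have h2 := hrow i
    omega
  obtain ⟨j, hjlt⟩ := hj
  obtain ⟨k, hklt⟩ := hk
  exact ⟨i, j, k, by rintro rfl; omega, hjlt, hklt⟩


private lemma swapKeyAux {n m : ℕ} (B : Fin n → Fin m → ℕ) :
    ∀ (N : ℕ) (A : Fin n → Fin m → ℕ), (∀ i, ∑ j, A i j = ∑ j, B i j) →
    ((∑ i, ∑ j, ((B i j : ℤ) - (A i j : ℤ)).natAbs) = 2 * N) →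
    ∃ F : ℕ → Fin n → Fin m → ℕ,
      F 0 = A ∧ F N = B ∧
      (∀ t < N, ∃ (i : Fin n) (j k : Fin m), j ≠ k ∧
        F t i j < B i j ∧ B i k < F t i k ∧
        (∀ a b, (F (t + 1) a b : ℤ)
          = (F t a b : ℤ) + (if a = i ∧ b = j then 1 else 0)
              - (if a = i ∧ b = k then 1 else 0))) ∧
      (∀ t ≤ N,
        (∑ i, ∑ j, ((B i j : ℤ) - (F t i j : ℤ)).natAbs) = 2 * N - 2 * t) := by
  intro N
  induction N with
  | zero =>
    intro A hrow hd
    have hAB : A = B := by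
      funext a b
      have h1 : ∀ i ∈ Finset.univ, (∑ j, ((B i j : ℤ) - (A i j : ℤ)).natAbs) = 0 := by
        rw [← Finset.sum_eq_zero_iff_of_nonneg (fun i _ => Nat.zero_le _)]
        omega
      have h2 := (Finset.sum_eq_zero_iff_of_nonneg (fun j _ => Nat.zero_le _)).1
        (h1 a (Finset.mem_univ a)) b (Finset.mem_univ b)
      omega
    subst hAB
    refine ⟨fun _ => A, rfl, rfl, fun t ht => by omega, fun t _ => ?_⟩
    simp
  | succ N ih =>
    intro A hrow hd
    have hne : A ≠ B := by
      rintro rfl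
      simp at hd
    obtain ⟨i, j, k, hjk, hjlt, hklt⟩ := swapExistsAux A B hrow hne
    set A' : Fin n → Fin m → ℕ := fun a b =>
      if a = i ∧ b = j then A a b + 1 else if a = i ∧ b = k then A a b - 1 else A a b
      with hA'def
    have hA'cast : ∀ a b, (A' a b : ℤ)
        = (A a b : ℤ) + (if a = i ∧ b = j then 1 else 0)
            - (if a = i ∧ b = k then 1 else 0) := by
      intro a b
      simp only [hA'def]
      by_cases h1 : a = i ∧ b = j
      · have h2 : ¬ (a = i ∧ b = k) := fun hh => hjk (h1.2.symm.trans hh.2)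
        simp only [if_pos h1, if_neg h2]
        rw [h1.1, h1.2]
        omega
      · by_cases h2 : a = i ∧ b = k
        · simp only [if_neg h1, if_pos h2]
          rw [h2.1, h2.2]
          omega
        · simp only [if_neg h1, if_neg h2]
          omega
    have hptw : ∀ a b, ((B a b : ℤ) - (A' a b : ℤ)).natAbs
        + (if a = i ∧ b = j then 1 else 0) + (if a = i ∧ b = k then 1 else 0)
        = ((B a b : ℤ) - (A a b : ℤ)).natAbs := by
      intro a b
      have hc := hA'cast a b
      by_cases h1 : a = i ∧ b = j
      · have h2 : ¬ (a = i ∧ b = k) := fun hh => hjk (h1.2.symm.trans hh.2)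
        simp only [if_pos h1, if_neg h2] at hc ⊢
        rw [h1.1, h1.2] at hc ⊢
        omega
      · by_cases h2 : a = i ∧ b = k
        · simp only [if_neg h1, if_pos h2] at hc ⊢
          rw [h2.1, h2.2] at hc ⊢
          omega
        · simp only [if_neg h1, if_neg h2] at hc ⊢
          omega
    have hsumind : ∀ (c : Fin m), (∑ a, ∑ b, (if a = i ∧ b = c then 1 else 0)) = 1 := by
      intro c
      simp [ite_and, Finset.sum_ite_eq']
    have hrow' : ∀ a, ∑ b, A' a b = ∑ b, B a b := by
      intro a
      have : (∑ b, (A' a b : ℤ)) = ∑ b, (A a b : ℤ) := by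
        calc ∑ b, (A' a b : ℤ)
            = ∑ b, ((A a b : ℤ) + (if a = i ∧ b = j then 1 else 0)
              - (if a = i ∧ b = k then 1 else 0)) :=
              Finset.sum_congr rfl fun b _ => hA'cast a b
          _ = ∑ b, (A a b : ℤ) := by
              simp [Finset.sum_add_distrib, Finset.sum_sub_distrib, ite_and,
                Finset.sum_ite_eq']
      have h2 : ∑ b, A' a b = ∑ b, A a b := by exact_mod_cast this
      rw [h2, hrow a]
    have hd' : (∑ a, ∑ b, ((B a b : ℤ) - (A' a b : ℤ)).natAbs) = 2 * N := by
      have e : (∑ a, ∑ b, (((B a b : ℤ) - (A' a b : ℤ)).natAbs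
          + (if a = i ∧ b = j then 1 else 0) + (if a = i ∧ b = k then 1 else 0)))
          = 2 * N + 2 := by
        calc _ = ∑ a, ∑ b, ((B a b : ℤ) - (A a b : ℤ)).natAbs := by
              refine Finset.sum_congr rfl fun a _ => Finset.sum_congr rfl fun b _ => hptw a b
          _ = 2 * N + 2 := by rw [hd]; ring
      simp only [Finset.sum_add_distrib] at e
      rw [hsumind j, hsumind k] at e
      omega
    obtain ⟨F', hF'0, hF'N, hF'step, hF'dist⟩ := ih A' hrow' hd'
    refine ⟨fun t => match t with | 0 => A | Nat.succ s => F' s, rfl, hF'N, ?_, ?_⟩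
    · intro t ht
      match t with
      | 0 =>
        refine ⟨i, j, k, hjk, hjlt, hklt, fun a b => ?_⟩
        show (F' 0 a b : ℤ) = _
        rw [hF'0]
        exact hA'cast a b
      | Nat.succ s =>
        exact hF'step s (by omega)
    · intro t ht
      match t with
      | 0 => simpa using hd
      | Nat.succ s =>
        have h := hF'dist s (by omega)
        show (∑ a, ∑ b, ((B a b : ℤ) - (F' s a b : ℤ)).natAbs) = _
        omega


/-- **Repeated swaps drive the L1 distance to zero.**
Let `A B : Fin n → Fin m → ℕ` have equal row sums, and let
`L = ∑ i j, |B i j - A i j|`. Then there is a sequence of natural-number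
matrices `A = A₀, A₁, …, A_{L/2} = B` where each `A_{t+1}` is obtained from
`A_t` by a single swap `(i; j, k)`, `j ≠ k` — adding `1` at `(i, j)` and
subtracting `1` at `(i, k)` — performed at a position where
`A_t i j < B i j` and `A_t i k > B i k`; consequently
`‖B - A_t‖₁ = L - 2t` for every `t ≤ L/2`. -/
theorem swaps_connect_equal_rowsum_matrices
    {n m : ℕ} (A B : Fin n → Fin m → ℕ)
    (hrow : ∀ i, ∑ j, A i j = ∑ j, B i j)
    (L : ℕ) (hL : L = ∑ i, ∑ j, ((B i j : ℤ) - (A i j : ℤ)).natAbs) :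
    ∃ F : ℕ → Fin n → Fin m → ℕ,
      F 0 = A ∧ F (L / 2) = B ∧
      (∀ t < L / 2, ∃ (i : Fin n) (j k : Fin m), j ≠ k ∧
        F t i j < B i j ∧ B i k < F t i k ∧
        (∀ a b, (F (t + 1) a b : ℤ)
          = (F t a b : ℤ) + (if a = i ∧ b = j then 1 else 0)
              - (if a = i ∧ b = k then 1 else 0))) ∧
      (∀ t ≤ L / 2,
        (∑ i, ∑ j, ((B i j : ℤ) - (F t i j : ℤ)).natAbs) = L - 2 * t) := by
  have hEven : Even L := by
    rw [hL]
    apply Finset.even_sum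
    intro i _
    exact even_dist (A i) (B i) (hrow i)
  obtain ⟨N, hN⟩ := hEven
  have hLN : L = 2 * N := by omega
  have hhalf : L / 2 = N := by omega
  obtain ⟨F, hF0, hFN, hstep, hdist⟩ := swapKeyAux B N A hrow (by omega)
  refine ⟨F, hF0, by rw [hhalf]; exact hFN, by rw [hhalf]; exact hstep, ?_⟩
  intro t ht
  rw [hhalf] at ht
  have := hdist t ht
  omega
end

section
/- Let C be a nonzero n×m integer matrix (Fin n → Fin m → ℤ) whose row sums and column sums are all zero. Then there exist r with 1 ≤ r ≤ n, pairwise distinct rows i_1, …, i_r, and columns j_1, …, j_r with j_{r+1} := j_1 and j_t ≠ j_{t+1} for every t, such that C(i_t, j_t) < 0 and C(i_t, j_{t+1}) > 0 for every t = 1, …, r. Consequently, the matrix C' = C + Σ_{t=1}^{r} (E_{i_t, j_t} − E_{i_t, j_{t+1}}) has all row sums and all column sums equal to zero, and ‖C'‖₁ = ‖C‖₁ − 2r. -/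
/-- The cyclic successor on `Fin r`: `t ↦ t + 1 (mod r)`, so that the index
after `r` wraps around to `1` (i.e. `j_{r+1} := j_1`). -/
def ringNext {r : ℕ} (t : Fin r) : Fin r :=
  ⟨((t : ℕ) + 1) % r, Nat.mod_lt _ t.pos⟩

/-- The matrix `∑ t, (E_{i t, j t} - E_{i t, j (t+1)})` of a ring swap,
where `E_{a,b}` is the matrix with a `1` at entry `(a, b)` and `0` elsewhere,
and `j (t+1)` is understood cyclically (`j_{r+1} := j_1`). -/
def ringSwapDelta {n m r : ℕ} (i : Fin r → Fin n) (j : Fin r → Fin m) :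
    Fin n → Fin m → ℤ :=
  fun a b => ∑ t : Fin r,
    ((if i t = a ∧ j t = b then 1 else 0) -
     (if i t = a ∧ j (ringNext t) = b then 1 else 0))

lemma ringNext_val {r : ℕ} (t : Fin r) :
    (ringNext t : ℕ) = if (t : ℕ) + 1 = r then 0 else (t : ℕ) + 1 := by
  have ht := t.2
  show ((t : ℕ) + 1) % r = _
  split
  · next h => rw [h, Nat.mod_self]
  · next h => exact Nat.mod_eq_of_lt (by omega)

lemma ringNext_bij {r : ℕ} : Function.Bijective (ringNext (r := r)) := by
  constructor
  · intro a b h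
    have h' := congrArg Fin.val h
    rw [ringNext_val, ringNext_val] at h'
    have ha := a.2; have hb := b.2
    apply Fin.ext
    split at h' <;> split at h' <;> omega
  · intro b
    have hb := b.2
    by_cases h0 : (b : ℕ) = 0
    · refine ⟨⟨r - 1, by omega⟩, Fin.ext ?_⟩
      rw [ringNext_val]; simp only [Fin.val_mk]; split <;> omega
    · refine ⟨⟨(b : ℕ) - 1, by omega⟩, Fin.ext ?_⟩
      rw [ringNext_val]; simp only [Fin.val_mk]; split <;> omega

lemma sum_delta_row {n m r : ℕ} (i : Fin r → Fin n) (j : Fin r → Fin m) (a : Fin n) :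
    ∑ b, ringSwapDelta i j a b = 0 := by
  classical
  unfold ringSwapDelta
  rw [Finset.sum_comm]
  apply Finset.sum_eq_zero
  intro t _
  rw [Finset.sum_sub_distrib]
  simp [ite_and, Finset.sum_ite_eq]

lemma sum_delta_col {n m r : ℕ} (i : Fin r → Fin n) (j : Fin r → Fin m) (b : Fin m) :
    ∑ a, ringSwapDelta i j a b = 0 := by
  classical
  unfold ringSwapDelta
  rw [Finset.sum_comm]
  have : ∀ t : Fin r, ∑ a, ((if i t = a ∧ j t = b then (1:ℤ) else 0) -
      (if i t = a ∧ j (ringNext t) = b then 1 else 0))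
      = (if j t = b then (1:ℤ) else 0) - (if j (ringNext t) = b then 1 else 0) := by
    intro t
    rw [Finset.sum_sub_distrib]
    simp [ite_and, Finset.sum_ite_eq']
  rw [Finset.sum_congr rfl (fun t _ => this t), Finset.sum_sub_distrib,
    Function.Bijective.sum_comp ringNext_bij (fun t => if j t = b then (1:ℤ) else 0),
    sub_self]

lemma delta_apply_of_ne {n m r : ℕ} (i : Fin r → Fin n) (j : Fin r → Fin m)
    (a : Fin n) (ha : ∀ t, i t ≠ a) (b : Fin m) : ringSwapDelta i j a b = 0 := by
  apply Finset.sum_eq_zero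
  intro t _
  simp [ha t]

lemma delta_apply {n m r : ℕ} (i : Fin r → Fin n) (j : Fin r → Fin m)
    (hi : Function.Injective i) (t₀ : Fin r) (b : Fin m) :
    ringSwapDelta i j (i t₀) b =
      (if j t₀ = b then 1 else 0) - (if j (ringNext t₀) = b then 1 else 0) := by
  classical
  unfold ringSwapDelta
  rw [Finset.sum_eq_single t₀]
  · simp
  · intro t _ ht
    have : i t ≠ i t₀ := fun h => ht (hi h)
    simp [this]
  · simp


/-- **Existence of an L1-decreasing ring swap.**
Let `C` be a nonzero `n × m` integer matrix with all row sums and column sums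
zero. Then there are `r` with `1 ≤ r ≤ n`, pairwise distinct rows
`i₁, …, i_r`, and columns `j₁, …, j_r` (with `j_{r+1} := j₁` and
`j_t ≠ j_{t+1}` for all `t`) such that `C (i t) (j t) < 0` and
`C (i t) (j (t+1)) > 0` for all `t`. Consequently,
`C' = C + ∑ t, (E_{i t, j t} - E_{i t, j (t+1)})` has all row and column sums
zero and `‖C'‖₁ = ‖C‖₁ - 2r`. -/
theorem exists_ring_swap_decreasing_l1
    {n m : ℕ} (C : Fin n → Fin m → ℤ)
    (hC : C ≠ fun _ _ => 0)
    (hrow : ∀ a, ∑ b, C a b = 0)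
    (hcol : ∀ b, ∑ a, C a b = 0) :
    ∃ (r : ℕ), 1 ≤ r ∧ r ≤ n ∧
      ∃ (i : Fin r → Fin n) (j : Fin r → Fin m),
        Function.Injective i ∧
        (∀ t, j t ≠ j (ringNext t)) ∧
        (∀ t, C (i t) (j t) < 0) ∧
        (∀ t, 0 < C (i t) (j (ringNext t))) ∧
        (∀ a, ∑ b, (C a b + ringSwapDelta i j a b) = 0) ∧
        (∀ b, ∑ a, (C a b + ringSwapDelta i j a b) = 0) ∧
        (∑ a, ∑ b, |C a b + ringSwapDelta i j a b|)
          = (∑ a, ∑ b, |C a b|) - 2 * r := by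
  classical
  -- basic sign lemmas
  have rowpos : ∀ a : Fin n, (∃ b, C a b < 0) → ∃ b, 0 < C a b := by
    rintro a ⟨b, hb⟩
    by_contra h
    push_neg at h
    have : ∑ b', C a b' < ∑ _b' : Fin m, (0:ℤ) :=
      Finset.sum_lt_sum (fun x _ => h x) ⟨b, Finset.mem_univ b, hb⟩
    simp [hrow a] at this
  have colneg : ∀ b : Fin m, (∃ a, 0 < C a b) → ∃ a, C a b < 0 := by
    rintro b ⟨a, ha⟩
    by_contra h
    push_neg at h
    have : ∑ _a' : Fin n, (0:ℤ) < ∑ a', C a' b :=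
      Finset.sum_lt_sum (fun x _ => h x) ⟨a, Finset.mem_univ a, ha⟩
    simp [hcol b] at this
  -- initial negative entry
  have hex : ∃ a b, C a b < 0 := by
    by_contra h
    push_neg at h
    apply hC
    funext a b
    exact (Finset.sum_eq_zero_iff_of_nonneg (fun b' _ => h a b')).mp (hrow a) b
      (Finset.mem_univ b)
  obtain ⟨a0, b0, hab⟩ := hex
  -- the chain
  have hstep : ∀ p : {p : Fin n × Fin m // C p.1 p.2 < 0},
      ∃ q : {p : Fin n × Fin m // C p.1 p.2 < 0}, 0 < C p.1.1 q.1.2 := by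
    rintro ⟨⟨a, b⟩, h⟩
    obtain ⟨b', hb'⟩ := rowpos a ⟨b, h⟩
    obtain ⟨a', ha'⟩ := colneg b' ⟨a, hb'⟩
    exact ⟨⟨(a', b'), ha'⟩, hb'⟩
  choose f hf using hstep
  set seq : ℕ → {p : Fin n × Fin m // C p.1 p.2 < 0} :=
    fun k => f^[k] ⟨(a0, b0), hab⟩ with hseq
  have seq_succ : ∀ k, seq (k + 1) = f (seq k) := by
    intro k; simp [hseq, Function.iterate_succ_apply']
  set R : ℕ → Fin n := fun k => (seq k).1.1 with hRdef
  set J : ℕ → Fin m := fun k => (seq k).1.2 with hJdef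
  have hlink : ∀ k, 0 < C (R k) (J (k + 1)) := by
    intro k
    have := hf (seq k)
    rw [← seq_succ] at this
    exact this
  have hnegC : ∀ k, C (R k) (J k) < 0 := fun k => (seq k).2
  -- pigeonhole: a repeated row among R 0, ..., R n
  have hrep : ∃ q, ∃ p, p < q ∧ R p = R q ∧ q ≤ n := by
    have hcard : Fintype.card (Fin n) < Fintype.card (Fin (n + 1)) := by simp
    obtain ⟨x, y, hxy, hfeq⟩ :=
      Fintype.exists_ne_map_eq_of_card_lt (fun k : Fin (n + 1) => R k) hcard
    rcases lt_or_gt_of_ne (fun h : (x : ℕ) = (y : ℕ) => hxy (Fin.ext h)) with h | h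
    · exact ⟨y, x, h, hfeq, by omega⟩
    · exact ⟨x, y, h, hfeq.symm, by omega⟩
  have hrep' : ∃ q, ∃ p, p < q ∧ R p = R q := by
    obtain ⟨q, p, h1, h2, _⟩ := hrep
    exact ⟨q, p, h1, h2⟩
  set Q := Nat.find hrep' with hQdef
  obtain ⟨p, hpQ, hRpQ⟩ := Nat.find_spec hrep'
  have hQn : Q ≤ n := by
    obtain ⟨q, p', h1, h2, h3⟩ := hrep
    exact le_trans (Nat.find_le ⟨p', h1, h2⟩) h3
  have hQmin : ∀ q' < Q, ¬∃ p', p' < q' ∧ R p' = R q' := fun q' hq' => Nat.find_min hrep' hq'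
  set r := Q - p with hrdef
  have hr2 : 2 ≤ r := by
    rcases Nat.lt_or_ge (Q - p) 2 with h | h
    · exfalso
      have hQp : Q = p + 1 := by omega
      have h1 := hlink p
      have h2 := hnegC (p + 1)
      have h3 : R p = R (p + 1) := by rw [← hQp]; exact hRpQ
      rw [← h3] at h2
      exact absurd h1 (not_lt.mpr (le_of_lt h2))
    · exact h
  have hrpos : 0 < r := by omega
  have hpQr : p + r = Q := by omega
  -- distinctness of rows R p, ..., R (Q-1)
  have hdist : ∀ s s' : ℕ, s < s' → s' < Q → R s ≠ R s' := by
    intro s s' hss' hs'Q heq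
    exact hQmin s' hs'Q ⟨s, hss', heq⟩
  set i : Fin r → Fin n := fun s => R (p + (s : ℕ)) with hidef
  set j : Fin r → Fin m :=
    fun s => if (s : ℕ) = 0 then J Q else J (p + (s : ℕ)) with hjdef
  have hinj : Function.Injective i := by
    intro s s' heq
    by_contra hne
    have hvne : (s : ℕ) ≠ (s' : ℕ) := fun h => hne (Fin.ext h)
    have hs := s.2; have hs' := s'.2
    rcases Nat.lt_or_ge (s : ℕ) (s' : ℕ) with h | h
    · exact hdist (p + (s : ℕ)) (p + (s' : ℕ)) (by omega) (by omega) heq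
    · exact hdist (p + (s' : ℕ)) (p + (s : ℕ)) (by omega) (by omega) heq.symm
  have hjnext : ∀ s : Fin r, j (ringNext s) = J (p + (s : ℕ) + 1) := by
    intro s
    have hv := ringNext_val s
    rw [hjdef]
    simp only
    rw [hv]
    by_cases h : (s : ℕ) + 1 = r
    · rw [if_pos h]
      have hq : p + (s : ℕ) + 1 = Q := by omega
      simp [hq]
    · rw [if_neg h, if_neg (by omega)]
      congr 1
  have hneg : ∀ s : Fin r, C (i s) (j s) < 0 := by
    intro s
    rw [hidef, hjdef]
    simp only
    by_cases h : (s : ℕ) = 0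
    · rw [if_pos h, h]
      have : R (p + 0) = R Q := by
        simpa using hRpQ
      rw [this]
      exact hnegC Q
    · rw [if_neg h]
      exact hnegC (p + (s : ℕ))
  have hpos : ∀ s : Fin r, 0 < C (i s) (j (ringNext s)) := by
    intro s
    rw [hjnext s]
    exact hlink (p + (s : ℕ))
  have hjne : ∀ s : Fin r, j s ≠ j (ringNext s) := by
    intro s heq
    have h1 := hneg s
    have h2 := hpos s
    rw [← heq] at h2
    omega
  have hrowL1 : ∀ a, ∑ b, |C a b + ringSwapDelta i j a b|
      = (∑ b, |C a b|) - (if ∃ t, i t = a then (2:ℤ) else 0) := by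
    intro a
    by_cases ha : ∃ t, i t = a
    · obtain ⟨t₀, ht₀⟩ := ha
      rw [if_pos ⟨t₀, ht₀⟩]
      have hΔ : ∀ b, ringSwapDelta i j a b =
          (if j t₀ = b then 1 else 0) - (if j (ringNext t₀) = b then 1 else 0) := by
        intro b
        rw [← ht₀]
        exact delta_apply i j hinj t₀ b
      have hC1 : C a (j t₀) < 0 := by rw [← ht₀]; exact hneg t₀
      have hC2 : 0 < C a (j (ringNext t₀)) := by rw [← ht₀]; exact hpos t₀
      have key : ∀ b, |C a b + ringSwapDelta i j a b|
          = |C a b| + ((if b = j t₀ then (-1:ℤ) else 0)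
            + (if b = j (ringNext t₀) then (-1:ℤ) else 0)) := by
        intro b
        rw [hΔ b]
        by_cases h1 : b = j t₀
        · subst h1
          have e1 : (if j t₀ = j t₀ then (1:ℤ) else 0) = 1 := if_pos rfl
          have e2 : (if j (ringNext t₀) = j t₀ then (1:ℤ) else 0) = 0 :=
            if_neg (fun h => hjne t₀ h.symm)
          have e3 : (if j t₀ = j t₀ then (-1:ℤ) else 0) = -1 := if_pos rfl
          have e4 : (if j t₀ = j (ringNext t₀) then (-1:ℤ) else 0) = 0 :=
            if_neg (hjne t₀)
          rw [e1, e2, e3, e4, abs_of_nonpos (by omega), abs_of_neg hC1]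
          ring
        · by_cases h2 : b = j (ringNext t₀)
          · subst h2
            have e1 : (if j t₀ = j (ringNext t₀) then (1:ℤ) else 0) = 0 :=
              if_neg (hjne t₀)
            have e2 : (if j (ringNext t₀) = j (ringNext t₀) then (1:ℤ) else 0) = 1 :=
              if_pos rfl
            have e3 : (if j (ringNext t₀) = j t₀ then (-1:ℤ) else 0) = 0 :=
              if_neg (fun h => hjne t₀ h.symm)
            have e4 : (if j (ringNext t₀) = j (ringNext t₀) then (-1:ℤ) else 0) = -1 :=
              if_pos rfl
            rw [e1, e2, e3, e4, abs_of_nonneg (by omega), abs_of_pos hC2]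
            ring
          · have e1 : (if j t₀ = b then (1:ℤ) else 0) = 0 :=
              if_neg (fun h => h1 h.symm)
            have e2 : (if j (ringNext t₀) = b then (1:ℤ) else 0) = 0 :=
              if_neg (fun h => h2 h.symm)
            have e3 : (if b = j t₀ then (-1:ℤ) else 0) = 0 := if_neg h1
            have e4 : (if b = j (ringNext t₀) then (-1:ℤ) else 0) = 0 := if_neg h2
            rw [e1, e2, e3, e4]
            simp
      rw [Finset.sum_congr rfl (fun b _ => key b), Finset.sum_add_distrib,
        Finset.sum_add_distrib]
      simp [Finset.sum_ite_eq']
      ring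
    · rw [if_neg ha]
      push_neg at ha
      have : ∀ b, ringSwapDelta i j a b = 0 := delta_apply_of_ne i j a ha
      simp [this]
  refine ⟨r, by omega, by omega, i, j, hinj, hjne, hneg, hpos, ?_, ?_, ?_⟩
  · intro a
    rw [Finset.sum_add_distrib, hrow a, sum_delta_row, add_zero]
  · intro b
    rw [Finset.sum_add_distrib, hcol b, sum_delta_col, add_zero]
  · rw [Finset.sum_congr rfl (fun a _ => hrowL1 a), Finset.sum_sub_distrib]
    congr 1
    have himg : (Finset.univ.filter (fun a => ∃ t, i t = a))
        = Finset.image i Finset.univ := by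
      ext a
      simp
    calc (∑ a : Fin n, if ∃ t, i t = a then (2:ℤ) else 0)
        = ∑ _a ∈ Finset.univ.filter (fun a => ∃ t, i t = a), (2:ℤ) :=
          (Finset.sum_filter _ _).symm
      _ = 2 * r := by
          rw [Finset.sum_const, himg, Finset.card_image_of_injective _ hinj]
          simp [Finset.card_univ, mul_comm]
end
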